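/- arXiv:2107.02068 — 3 statements merged into one kernel-verified Lean document; each statement's English description precedes it below -/
import Mathlib

section
/- Let θ ∈ (0,1) be irrational and define R_θ : ℝ/ℤ → ℝ/ℤ by R_θ(u) = u + θ mod 1. For u ∈ ℝ/ℤ and k ∈ ℕ, let 𝓡(k,u) = |{0 ≤ i ≤ k : R_θ^i(u) ∈ [1−θ, 1)}|. Then there exists a constant C > 0 such that for all u ∈ ℝ/ℤ and all k ∈ ℕ, |𝓡(k,u) − θ·k| ≤ C. -/
attribute [local instance] Classical.propDecidable

/-- Number of visits of the orbit `u, u+θ, ..., u+kθ` (mod 1) to the arc `[1-θ, 1)`. -/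
noncomputable def rotationVisits (θ u : ℝ) (k : ℕ) : ℕ :=
  ((Finset.range (k + 1)).filter (fun i => Int.fract (u + i * θ) ∈ Set.Ico (1 - θ) 1)).card

/-! The arc `[1-θ, 1)` is exactly where one step of the rotation crosses an integer, so the
visit count telescopes to `⌊u + (k+1)θ⌋ - ⌊u⌋`, which differs from `(k+1)θ` by less than one. -/

lemma ite_fract_mem_Ico_eq_floor_add_sub_floor {θ : ℝ} (h0 : 0 ≤ θ) (h1 : θ ≤ 1) (x : ℝ) :
    (if Int.fract x ∈ Set.Ico (1 - θ) 1 then 1 else 0 : ℤ) = ⌊x + θ⌋ - ⌊x⌋ := by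
  have hsplit : ⌊x + θ⌋ = ⌊Int.fract x + θ⌋ + ⌊x⌋ := by
    rw [← Int.floor_add_intCast, Int.fract]
    ring_nf
  have hf0 := Int.fract_nonneg x
  have hf1 := Int.fract_lt_one x
  rw [hsplit, add_sub_cancel_right, eq_comm, Int.floor_eq_iff]
  split_ifs with h
  · simp only [Set.mem_Ico] at h
    push_cast
    constructor <;> linarith
  · simp only [Set.mem_Ico, not_and, not_lt] at h
    have : Int.fract x < 1 - θ := by by_contra! h'; linarith [h h']
    push_cast
    constructor <;> linarith

lemma rotationVisits_eq_floor_sub_floor {θ : ℝ} (h0 : 0 ≤ θ) (h1 : θ ≤ 1) (u : ℝ) (k : ℕ) :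
    (rotationVisits θ u k : ℤ) = ⌊u + (k + 1) * θ⌋ - ⌊u⌋ := by
  have htel := Finset.sum_range_sub (fun i : ℕ => ⌊u + i * θ⌋) (k + 1)
  rw [Nat.cast_zero, zero_mul, add_zero] at htel
  push_cast at htel
  -- In `rotationVisits` the index `i` is real, so the range is the image of `Nat.cast`.
  rw [rotationVisits, bind_pure_comp, Finset.fmap_def, Finset.card_filter,
    Finset.sum_image Nat.cast_injective.injOn, Nat.cast_sum, ← htel]
  refine Finset.sum_congr rfl fun i _ => ?_
  rw [add_one_mul, ← add_assoc, ← ite_fract_mem_Ico_eq_floor_add_sub_floor h0 h1]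
  exact Nat.cast_ite _ 1 0

theorem bounded_discrepancy_general (θ : ℝ) (hθ : θ ∈ Set.Ioo (0:ℝ) 1) :
    ∃ C : ℝ, 0 < C ∧ ∀ (u : ℝ) (k : ℕ),
      |(rotationVisits θ u k : ℝ) - θ * k| ≤ C := by
  obtain ⟨hθ0, hθ1⟩ := hθ
  refine ⟨2, two_pos, fun u k => ?_⟩
  have hvisits : (rotationVisits θ u k : ℝ) = ⌊u + (k + 1) * θ⌋ - ⌊u⌋ := by
    exact_mod_cast rotationVisits_eq_floor_sub_floor hθ0.le hθ1.le u k
  rw [hvisits, abs_le]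
  have := Int.floor_le (u + (k + 1) * θ)
  have := Int.lt_floor_add_one (u + (k + 1) * θ)
  have := Int.floor_le u
  have := Int.lt_floor_add_one u
  constructor <;> linarith

theorem bounded_discrepancy (θ : ℝ) (hθ : θ ∈ Set.Ioo (0:ℝ) 1) (hirr : Irrational θ) :
    ∃ C : ℝ, 0 < C ∧ ∀ (u : ℝ) (k : ℕ),
      |(rotationVisits θ u k : ℝ) - θ * k| ≤ C :=
  bounded_discrepancy_general θ hθ
end

section
/- Let m > n ≥ 2 with θ = log n / log m, and let ν, η, ρ be shift-invariant Borel probability measures on I^ℕ (I finite) with ρ = θ·ν + (1−θ)·η and H(η,𝓓) ≤ H(ν,𝓓), where 𝓓 is the first-coordinate partition. Let a : I → ℕ with a(j) ≥ 1. Then (∑_j ν([j]) log a(j))/log m + h(ρ,σ)/log n ≤ log(∑_j a(j)^θ)/log n. -/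
open MeasureTheory

/-- The shift map on one-sided sequences. -/
def seqShift {α : Type*} (ω : ℕ → α) : ℕ → α := fun i => ω (i + 1)

/-- Shannon entropy of a measure on the full shift with respect to the partition into
cylinders of length `q`. -/
noncomputable def cylEntropy {ι : Type*} [Fintype ι] [MeasurableSpace ι]
    (μ : Measure (ℕ → ι)) (q : ℕ) : ℝ :=
  ∑ w : Fin q → ι, Real.negMulLog ((μ {x | ∀ i : Fin q, x (i : ℕ) = w i}).toReal)

/-- Kolmogorov–Sinai entropy of a shift-invariant measure on the full shift, computed
via the generating partition into first-coordinate cylinders: `h = inf_q H_q / q`. -/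
noncomputable def shiftEntropy {ι : Type*} [Fintype ι] [MeasurableSpace ι]
    (μ : Measure (ℕ → ι)) : ℝ :=
  ⨅ q : ℕ, cylEntropy μ (q + 1) / (q + 1)

/-!
The entropy of the mixture `ρ = θ ν + (1 - θ) η` on cylinders of length `q` exceeds
`θ H_q(ν) + (1 - θ) H_q(η)` by at most the entropy `negMulLog θ + negMulLog (1 - θ)` of the
mixing weights, and by subadditivity `H_q ≤ q H_1` for the invariant measures `ν, η`. Dividing by
`q` gives `h(ρ) ≤ θ H(ν, 𝓓) + (1 - θ) H(η, 𝓓) ≤ H(ν, 𝓓)`. Gibbs' inequality with the weights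
`a(j)^θ / ∑ a(i)^θ` bounds `H(ν, 𝓓)` by `log ∑ a(j)^θ - θ ∑ ν[j] log a(j)`, and
`θ / log n = 1 / log m` turns this into the claim.
-/

namespace Real

lemma negMulLog_add_le {x y : ℝ} (hx : 0 ≤ x) (hy : 0 ≤ y) :
    negMulLog (x + y) ≤ negMulLog x + negMulLog y := by
  rcases hx.eq_or_lt with rfl | hx
  · simp
  rcases hy.eq_or_lt with rfl | hy
  · simp
  have hlx : log x ≤ log (x + y) := log_le_log hx (by linarith)
  have hly : log y ≤ log (x + y) := log_le_log hy (by linarith)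
  simp only [negMulLog, neg_mul]
  nlinarith [mul_le_mul_of_nonneg_left hlx hx.le, mul_le_mul_of_nonneg_left hly hy.le]

/-- Pointwise form of Gibbs' inequality, from `log t ≤ t - 1` at `t = q / p`. -/
lemma negMulLog_le_mul_neg_log_add_sub {p q : ℝ} (hp : 0 ≤ p) (hq : 0 ≤ q)
    (hpq : q = 0 → p = 0) : negMulLog p ≤ p * -log q + (q - p) := by
  rcases hp.eq_or_lt with rfl | hp
  · simpa using hq
  have hq : 0 < q := hq.lt_of_ne fun h => hp.ne' (hpq h.symm)
  have key : log q - log p ≤ q / p - 1 := by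
    rw [← log_div hq.ne' hp.ne']
    exact log_le_sub_one_of_pos (div_pos hq hp)
  have hmul := mul_le_mul_of_nonneg_left key hp.le
  rw [mul_sub, mul_sub, mul_div_cancel₀ _ hp.ne'] at hmul
  simp only [negMulLog, neg_mul]
  linarith

lemma sum_negMulLog_le_sum_mul_neg_log {κ : Type*} [Fintype κ] {p q : κ → ℝ}
    (hp : ∀ i, 0 ≤ p i) (hq : ∀ i, 0 ≤ q i) (hpq : ∀ i, q i = 0 → p i = 0)
    (hps : ∑ i, p i = 1) (hqs : ∑ i, q i ≤ 1) :
    ∑ i, negMulLog (p i) ≤ ∑ i, p i * -log (q i) := by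
  have := Finset.sum_le_sum fun i (_ : i ∈ Finset.univ) =>
    negMulLog_le_mul_neg_log_add_sub (hp i) (hq i) (hpq i)
  rw [Finset.sum_add_distrib, Finset.sum_sub_distrib, hps] at this
  linarith

lemma sum_negMulLog_le_log_sum_sub {κ : Type*} [Fintype κ] {p w : κ → ℝ}
    (hp : ∀ i, 0 ≤ p i) (hps : ∑ i, p i = 1) (hw : ∀ i, 0 < w i) :
    ∑ i, negMulLog (p i) ≤ log (∑ i, w i) - ∑ i, p i * log (w i) := by
  have hS : 0 < ∑ i, w i := Finset.sum_pos (fun i _ => hw i)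
    (Finset.nonempty_of_sum_ne_zero (hps ▸ one_ne_zero))
  calc ∑ i, negMulLog (p i) ≤ ∑ i, p i * -log (w i / ∑ j, w j) :=
        sum_negMulLog_le_sum_mul_neg_log hp (fun i => (div_pos (hw i) hS).le)
          (fun i h => absurd h (div_pos (hw i) hS).ne') hps
          (by rw [← Finset.sum_div, div_self hS.ne'])
    _ = log (∑ i, w i) - ∑ i, p i * log (w i) := by
        simp_rw [log_div (hw _).ne' hS.ne', mul_neg, mul_sub, Finset.sum_neg_distrib,
          Finset.sum_sub_distrib, ← Finset.sum_mul, hps]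
        ring

lemma sum_negMulLog_convexComb_le {κ : Type*} [Fintype κ] {p q : κ → ℝ}
    (hp : ∀ i, 0 ≤ p i) (hq : ∀ i, 0 ≤ q i) (hps : ∑ i, p i = 1) (hqs : ∑ i, q i = 1)
    {t : ℝ} (ht₀ : 0 ≤ t) (ht₁ : t ≤ 1) :
    ∑ i, negMulLog (t * p i + (1 - t) * q i) ≤
      t * ∑ i, negMulLog (p i) + (1 - t) * ∑ i, negMulLog (q i)
        + (negMulLog t + negMulLog (1 - t)) := by
  calc ∑ i, negMulLog (t * p i + (1 - t) * q i)
      ≤ ∑ i, (negMulLog (t * p i) + negMulLog ((1 - t) * q i)) :=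
        Finset.sum_le_sum fun i _ =>
          negMulLog_add_le (mul_nonneg ht₀ (hp i)) (mul_nonneg (by linarith) (hq i))
    _ = _ := by
        simp only [negMulLog_mul, Finset.sum_add_distrib, ← Finset.mul_sum, ← Finset.sum_mul,
          hps, hqs]
        ring

end Real

/-- `H(μ, 𝓟)` for the partition `𝓟` of `X` into the fibres of `f`; thus `H(μ, 𝓓)` is
`partitionEntropy μ (fun x => x 0)`. -/
noncomputable def partitionEntropy {X α : Type*} [MeasurableSpace X] [Fintype α]
    (μ : Measure X) (f : X → α) : ℝ :=
  ∑ a, Real.negMulLog (μ.real (f ⁻¹' {a}))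

section PartitionEntropy

variable {X α β γ : Type*} [MeasurableSpace X] [Fintype α] [Fintype β] [Fintype γ]
  {μ : Measure X}

lemma measureReal_convexComb {ρ ν η : Measure X} [IsFiniteMeasure ν] [IsFiniteMeasure η]
    {t : ℝ} (ht₀ : 0 ≤ t) (ht₁ : t ≤ 1)
    (hρ : ρ = ENNReal.ofReal t • ν + ENNReal.ofReal (1 - t) • η) (s : Set X) :
    ρ.real s = t * ν.real s + (1 - t) * η.real s := by
  rw [hρ, measureReal_add_apply (ENNReal.mul_ne_top ENNReal.ofReal_ne_top (measure_ne_top ν s))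
      (ENNReal.mul_ne_top ENNReal.ofReal_ne_top (measure_ne_top η s)),
    measureReal_ennreal_smul_apply, measureReal_ennreal_smul_apply,
    ENNReal.toReal_ofReal ht₀, ENNReal.toReal_ofReal (by linarith)]

lemma sum_measureReal_preimage_singleton_eq_one [IsProbabilityMeasure μ] [MeasurableSpace α]
    [MeasurableSingletonClass α] {f : X → α} (hf : Measurable f) :
    ∑ a, μ.real (f ⁻¹' {a}) = 1 := by
  rw [sum_measureReal_preimage_singleton _ fun a _ => hf (measurableSet_singleton a)]
  simp

lemma sum_measureReal_preimage_singleton_mul_comp [IsFiniteMeasure μ] [MeasurableSpace γ]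
    [MeasurableSingletonClass γ] {h : X → γ} (hh : Measurable h) (k : γ → α) (φ : α → ℝ) :
    ∑ c, μ.real (h ⁻¹' {c}) * φ (k c) = ∑ a, μ.real ((k ∘ h) ⁻¹' {a}) * φ a := by
  classical
  rw [← Finset.sum_fiberwise Finset.univ k]
  refine Finset.sum_congr rfl fun a _ => ?_
  rw [Finset.sum_congr rfl fun c hc => by rw [(Finset.mem_filter.1 hc).2], ← Finset.sum_mul,
    sum_measureReal_preimage_singleton _ fun c _ => hh (measurableSet_singleton c)]
  congr 2
  ext x
  simp

lemma partitionEntropy_nonneg [IsProbabilityMeasure μ] (f : X → α) :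
    0 ≤ partitionEntropy μ f :=
  Finset.sum_nonneg fun _ _ => Real.negMulLog_nonneg measureReal_nonneg measureReal_le_one

lemma partitionEntropy_comp_equiv (e : α ≃ β) (f : X → α) :
    partitionEntropy μ (e ∘ f) = partitionEntropy μ f := by
  refine Fintype.sum_equiv e.symm _ _ fun b => ?_
  congr 3
  ext x
  simp [Equiv.eq_symm_apply]

lemma partitionEntropy_comp_of_map_eq [MeasurableSpace α] [MeasurableSingletonClass α]
    {T : X → X} (hT : Measurable T) (hμ : μ.map T = μ) {f : X → α} (hf : Measurable f) :
    partitionEntropy μ (f ∘ T) = partitionEntropy μ f := by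
  refine Finset.sum_congr rfl fun a _ => ?_
  rw [Set.preimage_comp, ← map_measureReal_apply hT (hf (measurableSet_singleton a)), hμ]

lemma partitionEntropy_pair_le [IsProbabilityMeasure μ] [MeasurableSpace α]
    [MeasurableSingletonClass α] [MeasurableSpace β] [MeasurableSingletonClass β]
    {f : X → α} {g : X → β} (hf : Measurable f) (hg : Measurable g) :
    partitionEntropy μ (fun x => (f x, g x)) ≤ partitionEntropy μ f + partitionEntropy μ g := by
  set h : X → α × β := fun x => (f x, g x)
  have hh : Measurable h := hf.prodMk hg
  set P : α × β → ℝ := fun z => μ.real (f ⁻¹' {z.1}) * μ.real (g ⁻¹' {z.2})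
  have hle_fst (z : α × β) : μ.real (h ⁻¹' {z}) ≤ μ.real (f ⁻¹' {z.1}) :=
    measureReal_mono fun x hx => congrArg Prod.fst hx
  have hle_snd (z : α × β) : μ.real (h ⁻¹' {z}) ≤ μ.real (g ⁻¹' {z.2}) :=
    measureReal_mono fun x hx => congrArg Prod.snd hx
  have hP : ∑ z, P z = 1 := by
    simp only [P, Fintype.sum_prod_type]
    rw [← Fintype.sum_mul_sum, sum_measureReal_preimage_singleton_eq_one hf,
      sum_measureReal_preimage_singleton_eq_one hg, one_mul]
  have hsplit (z : α × β) : μ.real (h ⁻¹' {z}) * -Real.log (P z) =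
      μ.real (h ⁻¹' {z}) * -Real.log (μ.real (f ⁻¹' {z.1}))
        + μ.real (h ⁻¹' {z}) * -Real.log (μ.real (g ⁻¹' {z.2})) := by
    rcases (measureReal_nonneg (μ := μ) (s := h ⁻¹' {z})).eq_or_lt with hz | hz
    · simp [← hz]
    rw [Real.log_mul (hz.trans_le (hle_fst z)).ne' (hz.trans_le (hle_snd z)).ne']
    ring
  calc partitionEntropy μ h ≤ ∑ z, μ.real (h ⁻¹' {z}) * -Real.log (P z) :=
        Real.sum_negMulLog_le_sum_mul_neg_log (fun _ => measureReal_nonneg)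
          (fun _ => mul_nonneg measureReal_nonneg measureReal_nonneg)
          (fun z hz => by
            rcases mul_eq_zero.1 hz with h0 | h0
            · exact le_antisymm (h0 ▸ hle_fst z) measureReal_nonneg
            · exact le_antisymm (h0 ▸ hle_snd z) measureReal_nonneg)
          (sum_measureReal_preimage_singleton_eq_one hh) hP.le
    _ = partitionEntropy μ f + partitionEntropy μ g := by
        simp only [hsplit, Finset.sum_add_distrib,
          sum_measureReal_preimage_singleton_mul_comp hh Prod.fst
            fun a => -Real.log (μ.real (f ⁻¹' {a})),
          sum_measureReal_preimage_singleton_mul_comp hh Prod.snd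
            fun b => -Real.log (μ.real (g ⁻¹' {b}))]
        simp only [partitionEntropy, Real.negMulLog, neg_mul, mul_neg]
        rfl

lemma partitionEntropy_convexComb_le {ρ ν η : Measure X} [IsProbabilityMeasure ν]
    [IsProbabilityMeasure η] {t : ℝ} (ht₀ : 0 ≤ t) (ht₁ : t ≤ 1)
    (hρ : ∀ s, ρ.real s = t * ν.real s + (1 - t) * η.real s) [MeasurableSpace α]
    [MeasurableSingletonClass α] {f : X → α} (hf : Measurable f) :
    partitionEntropy ρ f ≤ t * partitionEntropy ν f + (1 - t) * partitionEntropy η f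
      + (Real.negMulLog t + Real.negMulLog (1 - t)) := by
  simp only [partitionEntropy, hρ]
  exact Real.sum_negMulLog_convexComb_le (fun _ => measureReal_nonneg)
    (fun _ => measureReal_nonneg) (sum_measureReal_preimage_singleton_eq_one hf)
    (sum_measureReal_preimage_singleton_eq_one hf) ht₀ ht₁

end PartitionEntropy

section Shift

variable {ι : Type*}

def cylProj (q : ℕ) (x : ℕ → ι) : Fin q → ι := fun i => x i

lemma cylProj_succ (q : ℕ) :
    cylProj (ι := ι) (q + 1) =
      Fin.consEquiv (fun _ => ι) ∘ fun x => (x 0, cylProj q (seqShift x)) := by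
  funext x i
  exact Fin.cases rfl (fun _ => rfl) i

variable [MeasurableSpace ι]

lemma measurable_cylProj (q : ℕ) : Measurable (cylProj (ι := ι) q) :=
  measurable_pi_lambda _ fun _ => measurable_pi_apply _

lemma measurable_seqShift : Measurable (seqShift (α := ι)) :=
  measurable_pi_lambda _ fun i => measurable_pi_apply (i + 1)

variable [Fintype ι]

lemma cylEntropy_eq_partitionEntropy (μ : Measure (ℕ → ι)) (q : ℕ) :
    cylEntropy μ q = partitionEntropy μ (cylProj q) := by
  refine Finset.sum_congr rfl fun w _ => ?_
  congr 3
  ext x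
  simp [cylProj, funext_iff]

lemma shiftEntropy_le_of_cylEntropy_le {μ : Measure (ℕ → ι)} [IsProbabilityMeasure μ]
    {L C : ℝ} (h : ∀ q : ℕ, cylEntropy μ q ≤ q * L + C) : shiftEntropy μ ≤ L := by
  have hbdd : BddBelow (Set.range fun q : ℕ => cylEntropy μ (q + 1) / (q + 1)) := by
    refine ⟨0, Set.forall_mem_range.2 fun q => div_nonneg ?_ (by positivity)⟩
    rw [cylEntropy_eq_partitionEntropy]
    exact partitionEntropy_nonneg _
  have hle (q : ℕ) : shiftEntropy μ ≤ L + C / ((q : ℝ) + 1) := by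
    calc shiftEntropy μ ≤ cylEntropy μ (q + 1) / ((q : ℝ) + 1) := ciInf_le hbdd q
      _ ≤ (((q : ℝ) + 1) * L + C) / ((q : ℝ) + 1) := by
          gcongr
          exact_mod_cast h (q + 1)
      _ = L + C / ((q : ℝ) + 1) := by field_simp
  have hlim : Filter.Tendsto (fun q : ℕ => L + C / ((q : ℝ) + 1)) Filter.atTop (nhds L) := by
    simpa [div_eq_mul_inv] using
      tendsto_const_nhds.add (tendsto_one_div_add_atTop_nhds_zero_nat.const_mul C)
  exact ge_of_tendsto' hlim hle

variable [DiscreteMeasurableSpace ι]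

lemma cylEntropy_le_mul {μ : Measure (ℕ → ι)} [IsProbabilityMeasure μ]
    (hμ : μ.map seqShift = μ) (q : ℕ) :
    cylEntropy μ q ≤ q * partitionEntropy μ (fun x => x 0) := by
  induction q with
  | zero => simp [cylEntropy]
  | succ q ih =>
    rw [cylEntropy_eq_partitionEntropy, cylProj_succ, partitionEntropy_comp_equiv]
    calc _ ≤ partitionEntropy μ (fun x => x 0) + partitionEntropy μ (cylProj q ∘ seqShift) :=
          partitionEntropy_pair_le (measurable_pi_apply 0)
            ((measurable_cylProj q).comp measurable_seqShift)
      _ = partitionEntropy μ (fun x => x 0) + cylEntropy μ q := by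
          rw [partitionEntropy_comp_of_map_eq measurable_seqShift hμ (measurable_cylProj q),
            cylEntropy_eq_partitionEntropy]
      _ ≤ _ := by push_cast; linarith

lemma shiftEntropy_convexComb_le {ν η ρ : Measure (ℕ → ι)} [IsProbabilityMeasure ν]
    [IsProbabilityMeasure η] [IsProbabilityMeasure ρ]
    (hν : ν.map seqShift = ν) (hη : η.map seqShift = η) {t : ℝ} (ht₀ : 0 ≤ t) (ht₁ : t ≤ 1)
    (hρ : ρ = ENNReal.ofReal t • ν + ENNReal.ofReal (1 - t) • η) :
    shiftEntropy ρ ≤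
      t * partitionEntropy ν (fun x => x 0) + (1 - t) * partitionEntropy η (fun x => x 0) := by
  refine shiftEntropy_le_of_cylEntropy_le
    (C := Real.negMulLog t + Real.negMulLog (1 - t)) fun q => ?_
  calc cylEntropy ρ q
      ≤ t * cylEntropy ν q + (1 - t) * cylEntropy η q
          + (Real.negMulLog t + Real.negMulLog (1 - t)) := by
        simp only [cylEntropy_eq_partitionEntropy]
        exact partitionEntropy_convexComb_le ht₀ ht₁ (measureReal_convexComb ht₀ ht₁ hρ)
          (measurable_cylProj q)
    _ ≤ t * (q * partitionEntropy ν (fun x => x 0))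
          + (1 - t) * (q * partitionEntropy η (fun x => x 0))
          + (Real.negMulLog t + Real.negMulLog (1 - t)) := by
        gcongr
        · exact cylEntropy_le_mul hν q
        · exact cylEntropy_le_mul hη q
    _ = _ := by ring

end Shift

theorem hausdorff_entropy_bound_general {ι : Type*} [Fintype ι] [MeasurableSpace ι]
    [DiscreteMeasurableSpace ι]
    (m n : ℕ) (hnm : n < m) (hn : 2 ≤ n) (θ : ℝ) (hθ : θ = Real.log n / Real.log m)
    (ν η ρ : Measure (ℕ → ι))
    [IsProbabilityMeasure ν] [IsProbabilityMeasure η] [IsProbabilityMeasure ρ]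
    (hνinv : Measure.map seqShift ν = ν)
    (hηinv : Measure.map seqShift η = η)
    (hcomb : ρ = ENNReal.ofReal θ • ν + ENNReal.ofReal (1 - θ) • η)
    (hH : ∑ j, Real.negMulLog ((η {x | x 0 = j}).toReal)
      ≤ ∑ j, Real.negMulLog ((ν {x | x 0 = j}).toReal))
    (a : ι → ℕ) (ha : ∀ j, 1 ≤ a j) :
    (∑ j, (ν {x | x 0 = j}).toReal * Real.log (a j)) / Real.log m
        + shiftEntropy ρ / Real.log n
      ≤ Real.log (∑ j, (a j : ℝ) ^ θ) / Real.log n := by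
  have hlogn : 0 < Real.log n := Real.log_pos (by exact_mod_cast hn)
  have hlognm : Real.log n < Real.log m :=
    Real.log_lt_log (by positivity) (by exact_mod_cast hnm)
  have hlogm : 0 < Real.log m := hlogn.trans hlognm
  have hθ₀ : 0 ≤ θ := hθ ▸ div_nonneg hlogn.le hlogm.le
  have hθ₁ : θ ≤ 1 := hθ ▸ (div_le_one hlogm).2 hlognm.le
  have hentropy : shiftEntropy ρ ≤ partitionEntropy ν (fun x => x 0) := by
    have hH : partitionEntropy η (fun x => x 0) ≤ partitionEntropy ν (fun x => x 0) := hH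
    have := shiftEntropy_convexComb_le hνinv hηinv hθ₀ hθ₁ hcomb
    linarith [mul_le_mul_of_nonneg_left hH (sub_nonneg.2 hθ₁)]
  have hgibbs := Real.sum_negMulLog_le_log_sum_sub (p := fun j => ν.real {x | x 0 = j})
    (w := fun j => (a j : ℝ) ^ θ) (fun _ => measureReal_nonneg)
    (sum_measureReal_preimage_singleton_eq_one (measurable_pi_apply 0))
    (fun j => Real.rpow_pos_of_pos (by exact_mod_cast ha j) θ)
  simp only [Real.log_rpow (show (0 : ℝ) < a _ by exact_mod_cast ha _), mul_left_comm _ θ,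
    ← Finset.mul_sum] at hgibbs
  set A := ∑ j, ν.real {x | x 0 = j} * Real.log (a j)
  set S := ∑ j, (a j : ℝ) ^ θ
  calc A / Real.log m + shiftEntropy ρ / Real.log n
      ≤ A / Real.log m + (Real.log S - θ * A) / Real.log n := by
        gcongr
        exact hentropy.trans hgibbs
    _ = Real.log S / Real.log n := by
        rw [hθ]
        field_simp
        ring

theorem hausdorff_entropy_bound {ι : Type*} [Fintype ι] [MeasurableSpace ι]
    [DiscreteMeasurableSpace ι] [Nonempty ι]
    (m n : ℕ) (hnm : n < m) (hn : 2 ≤ n) (θ : ℝ) (hθ : θ = Real.log n / Real.log m)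
    (ν η ρ : Measure (ℕ → ι))
    [IsProbabilityMeasure ν] [IsProbabilityMeasure η] [IsProbabilityMeasure ρ]
    (hνinv : Measure.map seqShift ν = ν)
    (hηinv : Measure.map seqShift η = η)
    (hρinv : Measure.map seqShift ρ = ρ)
    (hcomb : ρ = ENNReal.ofReal θ • ν + ENNReal.ofReal (1 - θ) • η)
    (hH : ∑ j, Real.negMulLog ((η {x | x 0 = j}).toReal)
      ≤ ∑ j, Real.negMulLog ((ν {x | x 0 = j}).toReal))
    (a : ι → ℕ) (ha : ∀ j, 1 ≤ a j) :
    (∑ j, (ν {x | x 0 = j}).toReal * Real.log (a j)) / Real.log m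
        + shiftEntropy ρ / Real.log n
      ≤ Real.log (∑ j, (a j : ℝ) ^ θ) / Real.log n :=
  hausdorff_entropy_bound_general m n hnm hn θ hθ ν η ρ hνinv hηinv hcomb hH a ha
end

section
/- Let μ be a Borel probability measure on a compact metric space, E a Borel set with μ(E) ≥ 1 − ε for some ε ∈ (0, 1/2), and 𝓐 a finite partition. Then H(μ|_E, 𝓐) ≥ H(μ, 𝓐) − (ε·log|𝓐| + H(ε)), where μ|_E is the normalized restriction μ(·∩E)/μ(E) and H(ε) = −ε log ε − (1−ε) log(1−ε). -/
open MeasureTheory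

private lemma negMulLog_add_le' {x y : ℝ} (hx : 0 ≤ x) (hy : 0 ≤ y) :
    Real.negMulLog (x + y) ≤ Real.negMulLog x + Real.negMulLog y := by
  have h1 : x * Real.log x ≤ x * Real.log (x + y) := by
    rcases eq_or_lt_of_le hx with h | h
    · simp [← h]
    · exact mul_le_mul_of_nonneg_left (Real.log_le_log h (by linarith)) hx
  have h2 : y * Real.log y ≤ y * Real.log (x + y) := by
    rcases eq_or_lt_of_le hy with h | h
    · simp [← h]
    · exact mul_le_mul_of_nonneg_left (Real.log_le_log h (by linarith)) hy
  simp only [Real.negMulLog, neg_mul]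
  nlinarith

private lemma sum_negMulLog_le' {ι : Type*} (s : Finset ι) (hne : s.Nonempty) (r : ι → ℝ)
    (hr0 : ∀ i ∈ s, 0 ≤ r i) :
    ∑ i ∈ s, Real.negMulLog (r i)
      ≤ Real.negMulLog (∑ i ∈ s, r i) + (∑ i ∈ s, r i) * Real.log s.card := by
  set n : ℝ := (s.card : ℝ) with hn
  have hnpos : (0:ℝ) < n := by
    simp only [hn, Nat.cast_pos, Finset.card_pos]; exact hne
  have hjensen : n⁻¹ * ∑ i ∈ s, Real.negMulLog (r i)
      ≤ Real.negMulLog (n⁻¹ * ∑ i ∈ s, r i) := by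
    have := Real.concaveOn_negMulLog.le_map_sum (t := s) (w := fun _ => n⁻¹)
      (p := r) (fun i _ => by positivity)
      (by rw [Finset.sum_const, nsmul_eq_mul, hn, mul_inv_cancel₀ hnpos.ne'])
      (fun i hi => hr0 i hi)
    simpa [smul_eq_mul, ← Finset.mul_sum] using this
  have hlog : Real.negMulLog n⁻¹ = n⁻¹ * Real.log n := by
    simp [Real.negMulLog, Real.log_inv]
  calc ∑ i ∈ s, Real.negMulLog (r i)
      = n * (n⁻¹ * ∑ i ∈ s, Real.negMulLog (r i)) := by field_simp
    _ ≤ n * Real.negMulLog (n⁻¹ * ∑ i ∈ s, r i) :=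
        mul_le_mul_of_nonneg_left hjensen hnpos.le
    _ = Real.negMulLog (∑ i ∈ s, r i) + (∑ i ∈ s, r i) * Real.log n := by
        rw [Real.negMulLog_mul, hlog]; field_simp; ring

private lemma entropy_mix {ι : Type*} (s : Finset ι) (hne : s.Nonempty) (q r : ι → ℝ) (t : ℝ)
    (hq0 : ∀ i ∈ s, 0 ≤ q i) (hq1 : ∀ i ∈ s, q i ≤ 1) (hr0 : ∀ i ∈ s, 0 ≤ r i)
    (ht0 : 0 < t) (ht1 : t ≤ 1) (hqs : ∑ i ∈ s, q i = 1) (hrs : ∑ i ∈ s, r i = 1 - t) :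
    ∑ i ∈ s, Real.negMulLog (t * q i + r i)
      ≤ ∑ i ∈ s, Real.negMulLog (q i)
        + ((1 - t) * Real.log s.card + Real.binEntropy (1 - t)) := by
  have step1 : ∀ i ∈ s, Real.negMulLog (t * q i + r i)
      ≤ t * Real.negMulLog (q i) + q i * Real.negMulLog t + Real.negMulLog (r i) := by
    intro i hi
    calc Real.negMulLog (t * q i + r i)
        ≤ Real.negMulLog (t * q i) + Real.negMulLog (r i) :=
          negMulLog_add_le' (mul_nonneg ht0.le (hq0 i hi)) (hr0 i hi)
      _ = t * Real.negMulLog (q i) + q i * Real.negMulLog t + Real.negMulLog (r i) := by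
          rw [Real.negMulLog_mul]; ring
  have hHq : 0 ≤ ∑ i ∈ s, Real.negMulLog (q i) :=
    Finset.sum_nonneg fun i hi => Real.negMulLog_nonneg (hq0 i hi) (hq1 i hi)
  have hsum1 : ∑ i ∈ s, Real.negMulLog (t * q i + r i)
      ≤ t * ∑ i ∈ s, Real.negMulLog (q i) + Real.negMulLog t
        + ∑ i ∈ s, Real.negMulLog (r i) := by
    calc ∑ i ∈ s, Real.negMulLog (t * q i + r i)
        ≤ ∑ i ∈ s, (t * Real.negMulLog (q i) + q i * Real.negMulLog t + Real.negMulLog (r i)) :=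
          Finset.sum_le_sum step1
      _ = t * ∑ i ∈ s, Real.negMulLog (q i) + Real.negMulLog t
          + ∑ i ∈ s, Real.negMulLog (r i) := by
          rw [Finset.sum_add_distrib, Finset.sum_add_distrib, ← Finset.mul_sum,
            ← Finset.sum_mul, hqs]; ring
  have hsum2 : ∑ i ∈ s, Real.negMulLog (r i)
      ≤ Real.negMulLog (1 - t) + (1 - t) * Real.log s.card := by
    have := sum_negMulLog_le' s hne r hr0
    rwa [hrs] at this
  have hbin : Real.binEntropy (1 - t)
      = Real.negMulLog (1 - t) + Real.negMulLog t := by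
    rw [Real.binEntropy_eq_negMulLog_add_negMulLog_one_sub]
    ring_nf
  have htq : t * ∑ i ∈ s, Real.negMulLog (q i) ≤ ∑ i ∈ s, Real.negMulLog (q i) :=
    mul_le_of_le_one_left hHq ht1
  linarith

theorem entropy_conditioning_stability {X : Type*} [MetricSpace X] [CompactSpace X]
    [MeasurableSpace X] [BorelSpace X]
    (μ : Measure X) [IsProbabilityMeasure μ]
    (E : Set X) (hE : MeasurableSet E)
    (ε : ℝ) (hε : ε ∈ Set.Ioo (0:ℝ) (1/2))
    (hμE : 1 - ε ≤ (μ E).toReal)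
    (𝓐 : Finset (Set X))
    (hmeas : ∀ A ∈ 𝓐, MeasurableSet A)
    (hdisj : (𝓐 : Set (Set X)).Pairwise Disjoint)
    (hcover : ⋃₀ (𝓐 : Set (Set X)) = Set.univ) :
    ∑ A ∈ 𝓐, Real.negMulLog ((((μ E)⁻¹ • μ.restrict E) A).toReal)
      ≥ ∑ A ∈ 𝓐, Real.negMulLog ((μ A).toReal)
        - (ε * Real.log (𝓐.card) + Real.binEntropy ε) := by
  obtain ⟨hε0, hε12⟩ := hε
  set t : ℝ := (μ E).toReal with ht
  have ht0 : (0:ℝ) < t := by linarith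
  have hμEne : μ E ≠ 0 := by
    intro h; rw [h] at ht; simp at ht; linarith
  have hμEtop : μ E ≠ ⊤ := measure_ne_top μ E
  have ht1 : t ≤ 1 := by
    rw [ht]
    exact ENNReal.toReal_le_of_le_ofReal zero_le_one (by simpa using prob_le_one)
  -- the partition union over 𝓐 of any intersection
  have hU : ⋃ A ∈ 𝓐, (A : Set X) = Set.univ := by
    simpa [Set.sUnion_eq_biUnion] using hcover
  have hbiUnion : ∀ S : Set X, ⋃ A ∈ 𝓐, (A ∩ S) = S := by
    intro S
    rw [← Set.iUnion₂_inter, hU, Set.univ_inter]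
  have hdisj' : ∀ S : Set X, ((𝓐 : Set (Set X))).PairwiseDisjoint (fun A => A ∩ S) := by
    intro S A hA B hB hne
    exact Disjoint.mono Set.inter_subset_left Set.inter_subset_left (hdisj hA hB hne)
  have hsumE : ∑ A ∈ 𝓐, μ (A ∩ E) = μ E := by
    rw [← measure_biUnion_finset (hdisj' E) (fun A hA => (hmeas A hA).inter hE), hbiUnion E]
  have hsumEc : ∑ A ∈ 𝓐, μ (A ∩ Eᶜ) = μ Eᶜ := by
    rw [← measure_biUnion_finset (hdisj' Eᶜ) (fun A hA => (hmeas A hA).inter hE.compl),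
      hbiUnion Eᶜ]
  have hne : 𝓐.Nonempty := by
    rcases Finset.eq_empty_or_nonempty 𝓐 with h | h
    · exfalso
      rw [h] at hcover
      simp only [Finset.coe_empty, Set.sUnion_empty] at hcover
      have : μ Set.univ = 1 := measure_univ
      rw [← hcover] at this
      simp at this
    · exact h
  set q : Set X → ℝ := fun A => (μ (A ∩ E)).toReal / t with hq
  set r : Set X → ℝ := fun A => (μ (A ∩ Eᶜ)).toReal with hr
  have hq0 : ∀ A ∈ 𝓐, 0 ≤ q A := fun A _ => by positivity
  have hq1 : ∀ A ∈ 𝓐, q A ≤ 1 := by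
    intro A hA
    rw [hq, div_le_one ht0]
    exact ENNReal.toReal_mono hμEtop (measure_mono Set.inter_subset_right)
  have hr0 : ∀ A ∈ 𝓐, 0 ≤ r A := fun A _ => ENNReal.toReal_nonneg
  have hqs : ∑ A ∈ 𝓐, q A = 1 := by
    rw [hq]
    simp only [div_eq_mul_inv, ← Finset.sum_mul]
    rw [← ENNReal.toReal_sum (fun A _ => measure_ne_top μ _), hsumE, ← ht,
      mul_inv_cancel₀ ht0.ne']
  have hμEc : (μ Eᶜ).toReal = 1 - t := by
    rw [measure_compl hE hμEtop, measure_univ,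
      ENNReal.toReal_sub_of_le (by simpa using prob_le_one) (by simp)]
    simp [ht]
  have hrs : ∑ A ∈ 𝓐, r A = 1 - t := by
    rw [hr, ← ENNReal.toReal_sum (fun A _ => measure_ne_top μ _), hsumEc, hμEc]
  have hpA : ∀ A ∈ 𝓐, (μ A).toReal = t * q A + r A := by
    intro A hA
    have h := measure_inter_add_diff (μ := μ) A hE
    rw [Set.diff_eq] at h
    rw [← h, ENNReal.toReal_add (measure_ne_top μ _) (measure_ne_top μ _), hq, hr]
    field_simp
  have hlhs : ∀ A ∈ 𝓐, (((μ E)⁻¹ • μ.restrict E) A).toReal = q A := by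
    intro A hA
    rw [Measure.smul_apply, smul_eq_mul, Measure.restrict_apply (hmeas A hA),
      ENNReal.toReal_mul, ENNReal.toReal_inv, hq, ht]
    ring
  have key := entropy_mix 𝓐 hne q r t hq0 hq1 hr0 ht0 ht1 hqs hrs
  have hbinmono : Real.binEntropy (1 - t) ≤ Real.binEntropy ε := by
    have h1t : 1 - t ≤ ε := by linarith
    rcases eq_or_lt_of_le h1t with h | h
    · rw [h]
    · exact (Real.binEntropy_strictMonoOn ⟨by linarith, by norm_num; linarith⟩
        ⟨hε0.le, by norm_num; linarith⟩ h).le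
  have hlogn : (0:ℝ) ≤ Real.log 𝓐.card := by
    apply Real.log_nonneg
    have : 1 ≤ 𝓐.card := Finset.card_pos.mpr hne
    exact_mod_cast this
  have htlog : (1 - t) * Real.log 𝓐.card ≤ ε * Real.log 𝓐.card :=
    mul_le_mul_of_nonneg_right (by linarith) hlogn
  have hL : ∑ A ∈ 𝓐, Real.negMulLog ((((μ E)⁻¹ • μ.restrict E) A).toReal)
      = ∑ A ∈ 𝓐, Real.negMulLog (q A) :=
    Finset.sum_congr rfl fun A hA => by rw [hlhs A hA]
  have hP : ∑ A ∈ 𝓐, Real.negMulLog ((μ A).toReal)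
      = ∑ A ∈ 𝓐, Real.negMulLog (t * q A + r A) :=
    Finset.sum_congr rfl fun A hA => by rw [hpA A hA]
  rw [ge_iff_le, hL, hP]
  linarith
end
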